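/- arXiv:2005.04282 — 8 statements merged into one kernel-verified Lean document; each statement's English description precedes it below -/
import Mathlib

section
/- Let S be a sunflower with at least r+1 petals contained in an intersecting r-uniform hypergraph G with minimum positive co-degree at least k. Then the core Y of S satisfies |Y| ≥ k. -/
/-!
Every edge `g` of `G` meets the core `Y`: otherwise the petals of `S` would meet `g` in pairwise
disjoint nonempty sets, so `r + 1 ≤ |S| ≤ |g| = r`. Now take an edge `g₀` meeting `Y` in as few
vertices as possible, a vertex `y ∈ g₀ ∩ Y`, and `T = g₀ \ {y}`, an `(r-1)`-set. An edge `h ⊇ T`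
is `T` plus one vertex, and by minimality of `g₀` that vertex lies in `Y`. The edges through `T`
are therefore distinct one-vertex extensions of `T` by vertices of `Y`, so `k ≤ |Y|`.
-/

namespace Finset

variable {α : Type*} [DecidableEq α]

theorem card_le_card_of_forall_inter_nonempty {S : Finset (Finset α)} {Y g : Finset α}
    (hcore : ∀ a ∈ S, ∀ b ∈ S, a ≠ b → a ∩ b ⊆ Y) (hgY : Disjoint g Y)
    (hmeet : ∀ s ∈ S, (s ∩ g).Nonempty) : S.card ≤ g.card := by
  have hdisj : (S : Set (Finset α)).PairwiseDisjoint (· ∩ g) := by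
    intro a ha b hb hab
    refine disjoint_left.mpr fun x hxa hxb => disjoint_left.mp hgY (mem_inter.mp hxa).2 ?_
    exact hcore a ha b hb hab (mem_inter.mpr ⟨(mem_inter.mp hxa).1, (mem_inter.mp hxb).1⟩)
  calc S.card ≤ (S.biUnion (· ∩ g)).card := card_le_card_biUnion hdisj hmeet
    _ ≤ g.card := card_le_card (biUnion_subset.mpr fun _ _ => inter_subset_right)

theorem card_le_of_forall_superset_card_eq_succ {F : Finset (Finset α)} {T U : Finset α}
    (hT : ∀ h ∈ F, T ⊆ h) (hcard : ∀ h ∈ F, h.card = T.card + 1) (hU : ∀ h ∈ F, h \ T ⊆ U) :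
    F.card ≤ U.card := by
  have hinj : Set.InjOn (· \ T) (F : Set (Finset α)) := by
    intro a ha b hb hab
    rw [← union_sdiff_of_subset (hT a ha), ← union_sdiff_of_subset (hT b hb)]
    exact congrArg (T ∪ ·) hab
  have hmaps : F.image (· \ T) ⊆ U.powersetCard 1 := by
    refine image_subset_iff.mpr fun h hh => mem_powersetCard.mpr ⟨hU h hh, ?_⟩
    rw [card_sdiff_of_subset (hT h hh), hcard h hh]
    omega
  calc F.card = (F.image (· \ T)).card := (card_image_of_injOn hinj).symm
    _ ≤ (U.powersetCard 1).card := card_le_card hmaps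
    _ = U.card := by rw [card_powersetCard, Nat.choose_one_right]

theorem sdiff_erase_subset_of_card_inter_le {g h Y : Finset α} {y : α} (hy : y ∈ g ∩ Y)
    (hgh : g.erase y ⊆ h) (hcard : h.card = g.card) (hmin : (g ∩ Y).card ≤ (h ∩ Y).card) :
    h \ g.erase y ⊆ Y := by
  intro x hx
  by_contra hxY
  have hsingle : (h \ g.erase y).card ≤ 1 := by
    rw [card_sdiff_of_subset hgh, card_erase_of_mem (mem_inter.mp hy).1, hcard]
    omega
  have hsub : h ∩ Y ⊆ (g ∩ Y).erase y := by
    intro z hz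
    obtain ⟨hzh, hzY⟩ := mem_inter.mp hz
    by_cases hzg : z ∈ g.erase y
    · exact mem_erase.mpr ⟨(mem_erase.mp hzg).1, mem_inter.mpr ⟨(mem_erase.mp hzg).2, hzY⟩⟩
    · have hzx : z = x := card_le_one.mp hsingle z (mem_sdiff.mpr ⟨hzh, hzg⟩) x hx
      exact absurd (hzx ▸ hzY) hxY
  have hle := card_le_card hsub
  rw [card_erase_of_mem hy] at hle
  have hpos := card_pos.mpr ⟨y, hy⟩
  omega

end Finset

open Finset

theorem stmt_1_general {V : Type*} [DecidableEq V] (r k : ℕ)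
    (G : Finset (Finset V))
    (hunif : ∀ h ∈ G, h.card = r)
    (hint : ∀ a ∈ G, ∀ b ∈ G, (a ∩ b).Nonempty)
    (hcodeg : ∀ S : Finset V, S.card = r - 1 → (∃ h ∈ G, S ⊆ h) →
      k ≤ (G.filter fun h => S ⊆ h).card)
    (S : Finset (Finset V)) (Y : Finset V)
    (hSG : S ⊆ G) (hS : r + 1 ≤ S.card)
    (hcore : ∀ a ∈ S, ∀ b ∈ S, a ≠ b → a ∩ b = Y) :
    k ≤ Y.card := by
  have hmeet : ∀ g ∈ G, (g ∩ Y).Nonempty := by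
    intro g hg
    by_contra hgY
    have hSg := card_le_card_of_forall_inter_nonempty
      (fun a ha b hb hab => (hcore a ha b hb hab).le)
      (disjoint_iff_inter_eq_empty.mpr (not_nonempty_iff_eq_empty.mp hgY))
      (fun s hs => hint s (hSG hs) g hg)
    rw [hunif g hg] at hSg
    omega
  have hGne : G.Nonempty := (card_pos.mp (by omega)).mono hSG
  obtain ⟨g₀, hg₀, hmin⟩ := exists_min_image G (fun g => (g ∩ Y).card) hGne
  obtain ⟨y, hy⟩ := hmeet g₀ hg₀
  have hTcard : (g₀.erase y).card = r - 1 := by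
    rw [card_erase_of_mem (mem_inter.mp hy).1, hunif g₀ hg₀]
  refine (hcodeg _ hTcard ⟨g₀, hg₀, erase_subset y g₀⟩).trans ?_
  have hr : 1 ≤ r := hunif g₀ hg₀ ▸ card_pos.mpr ⟨y, (mem_inter.mp hy).1⟩
  refine card_le_of_forall_superset_card_eq_succ (fun h hh => (mem_filter.mp hh).2)
    (fun h hh => ?_) (fun h hh => ?_)
  · rw [hunif h (mem_filter.mp hh).1, hTcard]
    omega
  · obtain ⟨hG, hTh⟩ := mem_filter.mp hh
    exact sdiff_erase_subset_of_card_inter_le hy hTh (by rw [hunif h hG, hunif g₀ hg₀])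
      (hmin h hG)

/-- A sunflower with at least r+1 petals inside an intersecting r-uniform hypergraph G
with minimum positive co-degree at least k has core of size at least k. -/
theorem stmt_1 {V : Type*} [Fintype V] [DecidableEq V] (r k : ℕ)
    (G : Finset (Finset V))
    (hunif : ∀ h ∈ G, h.card = r)
    (hint : ∀ a ∈ G, ∀ b ∈ G, (a ∩ b).Nonempty)
    (hcodeg : ∀ S : Finset V, S.card = r - 1 → (∃ h ∈ G, S ⊆ h) →
      k ≤ (G.filter fun h => S ⊆ h).card)
    (S : Finset (Finset V)) (Y : Finset V)
    (hSG : S ⊆ G) (hS : r + 1 ≤ S.card)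
    (hcore : ∀ a ∈ S, ∀ b ∈ S, a ≠ b → a ∩ b = Y) :
    k ≤ Y.card :=
  stmt_1_general r k G hunif hint hcodeg S Y hSG hS hcore
end

section
/- If a sunflower with core Y has at least r+1 petals inside an intersecting r-uniform hypergraph G, then Y is a transversal of G, i.e., every hyperedge of G intersects Y. -/
/-!
If an edge `h` missed the core `Y`, the traces `h ∩ a` of the petals `a` would be pairwise
disjoint (two petals only share `Y`) and nonempty (`G` is intersecting), so `h` would contain
at least as many points as there are petals, i.e. more than `r`.
-/

namespace Finset

variable {V : Type*} [DecidableEq V]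

def IsSunflower (S : Finset (Finset V)) (Y : Finset V) : Prop :=
  ∀ a ∈ S, ∀ b ∈ S, a ≠ b → a ∩ b = Y

theorem IsSunflower.pairwiseDisjoint_inter {S : Finset (Finset V)} {Y h : Finset V}
    (hS : IsSunflower S Y) (hY : Disjoint h Y) :
    (S : Set (Finset V)).PairwiseDisjoint (h ∩ ·) := by
  intro a ha b hb hab
  rw [Function.onFun, disjoint_iff_inter_eq_empty, inter_inter_inter_comm, inter_self,
    hS a ha b hb hab, disjoint_iff_inter_eq_empty.mp hY]

theorem IsSunflower.card_le_of_disjoint_core {S : Finset (Finset V)} {Y h : Finset V}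
    (hS : IsSunflower S Y) (hY : Disjoint h Y) (hmeet : ∀ a ∈ S, (h ∩ a).Nonempty) :
    #S ≤ #h :=
  calc #S ≤ #(S.biUnion (h ∩ ·)) := card_le_card_biUnion (hS.pairwiseDisjoint_inter hY) hmeet
    _ ≤ #h := card_le_card (biUnion_subset.mpr fun _ _ ↦ inter_subset_left)

end Finset

theorem stmt_2_general {V : Type*} [DecidableEq V] (r : ℕ)
    (G : Finset (Finset V))
    (hunif : ∀ h ∈ G, h.card = r)
    (hint : ∀ a ∈ G, ∀ b ∈ G, (a ∩ b).Nonempty)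
    (S : Finset (Finset V)) (Y : Finset V)
    (hSG : S ⊆ G) (hS : r + 1 ≤ S.card)
    (hcore : ∀ a ∈ S, ∀ b ∈ S, a ≠ b → a ∩ b = Y) :
    ∀ h ∈ G, (h ∩ Y).Nonempty := by
  intro h hG
  by_contra hmiss
  have hY : Disjoint h Y :=
    Finset.disjoint_iff_inter_eq_empty.mpr (Finset.not_nonempty_iff_eq_empty.mp hmiss)
  have hle : S.card ≤ h.card :=
    Finset.IsSunflower.card_le_of_disjoint_core hcore hY fun a ha ↦ hint h hG a (hSG ha)
  rw [hunif h hG] at hle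
  omega

/-- If a sunflower with core Y has at least r+1 petals inside an intersecting r-uniform
hypergraph G, then Y is a transversal of G. -/
theorem stmt_2 {V : Type*} [Fintype V] [DecidableEq V] (r : ℕ)
    (G : Finset (Finset V))
    (hunif : ∀ h ∈ G, h.card = r)
    (hint : ∀ a ∈ G, ∀ b ∈ G, (a ∩ b).Nonempty)
    (S : Finset (Finset V)) (Y : Finset V)
    (hSG : S ⊆ G) (hS : r + 1 ≤ S.card)
    (hcore : ∀ a ∈ S, ∀ b ∈ S, a ≠ b → a ∩ b = Y) :
    ∀ h ∈ G, (h ∩ Y).Nonempty :=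
  stmt_2_general r G hunif hint S Y hSG hS hcore
end

section
/- Let n ≥ r ≥ t and let H be an intersecting r-uniform hypergraph on n vertices with transversal number τ(H) ≥ t. Then the number of hyperedges of H is at most r^t · C(n-t, r-t). -/
/-! Branching argument: while a set `S` of fewer than `τ(H)` vertices is fixed, some edge `h₀`
misses `S`, and every edge containing `S` meets `h₀`, so it contains `S ∪ {v}` for one of the
`r` vertices `v ∈ h₀`. After `t` branchings from `S = ∅` the fixed set has `t` vertices, and at
most `C(n - t, r - t)` edges of size `r` contain it. -/

open Finset

section

variable {V : Type*} [DecidableEq V]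

theorem card_filter_superset_le_choose [Fintype V] {H : Finset (Finset V)} {r : ℕ}
    (hunif : ∀ h ∈ H, #h = r) (S : Finset V) :
    #{h ∈ H | S ⊆ h} ≤ (Fintype.card V - #S).choose (r - #S) := by
  calc #{h ∈ H | S ⊆ h} ≤ #((univ \ S).powersetCard (r - #S)) := by
        refine card_le_card_of_injOn (· \ S) (fun h hh => ?_) (fun a ha b hb hab => ?_)
        · simp only [coe_filter, Set.mem_ofPred_eq] at hh
          rw [mem_coe, mem_powersetCard, card_sdiff_of_subset hh.2, hunif h hh.1]
          exact ⟨sdiff_subset_sdiff (subset_univ _) le_rfl, rfl⟩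
        · simp only [coe_filter, Set.mem_ofPred_eq] at ha hb
          rw [← sdiff_union_of_subset ha.2, ← sdiff_union_of_subset hb.2]
          exact congrArg (· ∪ S) hab
    _ = (Fintype.card V - #S).choose (r - #S) := by
        rw [card_powersetCard, card_sdiff_of_subset (subset_univ S), card_univ]

theorem card_filter_superset_le_sum_insert {H : Finset (Finset V)}
    (hint : ∀ a ∈ H, ∀ b ∈ H, (a ∩ b).Nonempty) {h₀ : Finset V} (hh₀ : h₀ ∈ H)
    (S : Finset V) :
    #{h ∈ H | S ⊆ h} ≤ ∑ v ∈ h₀, #{h ∈ H | insert v S ⊆ h} := by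
  refine (card_le_card fun h hh => ?_).trans card_biUnion_le
  rw [mem_filter] at hh
  obtain ⟨v, hv⟩ := hint h hh.1 h₀ hh₀
  rw [mem_inter] at hv
  exact mem_biUnion.2 ⟨v, hv.2, mem_filter.2 ⟨hh.1, insert_subset hv.1 hh.2⟩⟩

theorem exists_disjoint_of_card_lt {H : Finset (Finset V)} {t : ℕ}
    (htau : ∀ T : Finset V, (∀ h ∈ H, (h ∩ T).Nonempty) → t ≤ #T) {S : Finset V}
    (hS : #S < t) : ∃ h ∈ H, Disjoint h S := by
  by_contra! hnone
  exact (htau S fun h hh => not_disjoint_iff_nonempty_inter.1 (hnone h hh)).not_gt hS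

theorem card_filter_superset_le_of_card_add_eq [Fintype V] {H : Finset (Finset V)}
    {r t : ℕ} (hunif : ∀ h ∈ H, #h = r) (hint : ∀ a ∈ H, ∀ b ∈ H, (a ∩ b).Nonempty)
    (htau : ∀ T : Finset V, (∀ h ∈ H, (h ∩ T).Nonempty) → t ≤ #T) (k : ℕ) :
    ∀ S : Finset V, #S + k = t →
      #{h ∈ H | S ⊆ h} ≤ r ^ k * (Fintype.card V - t).choose (r - t) := by
  induction k with
  | zero =>
    intro S hS
    rw [pow_zero, one_mul, ← hS, add_zero]
    exact card_filter_superset_le_choose hunif S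
  | succ k ih =>
    intro S hS
    obtain ⟨h₀, hh₀, hdisj⟩ := exists_disjoint_of_card_lt htau (S := S) (by omega)
    calc #{h ∈ H | S ⊆ h} ≤ ∑ v ∈ h₀, #{h ∈ H | insert v S ⊆ h} :=
          card_filter_superset_le_sum_insert hint hh₀ S
      _ ≤ ∑ _v ∈ h₀, r ^ k * (Fintype.card V - t).choose (r - t) := by
          refine sum_le_sum fun v hv => ih _ ?_
          rw [card_insert_of_notMem (disjoint_left.1 hdisj hv)]
          omega
      _ = r ^ (k + 1) * (Fintype.card V - t).choose (r - t) := by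
          rw [sum_const, hunif h₀ hh₀, smul_eq_mul, pow_succ]
          ring

end

theorem stmt_3_general {V : Type*} [Fintype V] [DecidableEq V] (n r t : ℕ)
    (hn : Fintype.card V = n)
    (H : Finset (Finset V))
    (hunif : ∀ h ∈ H, h.card = r)
    (hint : ∀ a ∈ H, ∀ b ∈ H, (a ∩ b).Nonempty)
    (htau : ∀ T : Finset V, (∀ h ∈ H, (h ∩ T).Nonempty) → t ≤ T.card) :
    H.card ≤ r ^ t * (n - t).choose (r - t) := by
  have h := card_filter_superset_le_of_card_add_eq hunif hint htau t ∅ (by simp)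
  rwa [filter_true_of_mem fun h _ => empty_subset h, hn] at h

/-- An intersecting r-uniform n-vertex hypergraph with transversal number at least t
(n ≥ r ≥ t) has at most r^t · C(n-t, r-t) hyperedges. -/
theorem stmt_3 {V : Type*} [Fintype V] [DecidableEq V] (n r t : ℕ)
    (hn : Fintype.card V = n) (hnr : r ≤ n) (hrt : t ≤ r)
    (H : Finset (Finset V))
    (hunif : ∀ h ∈ H, h.card = r)
    (hint : ∀ a ∈ H, ∀ b ∈ H, (a ∩ b).Nonempty)
    (htau : ∀ T : Finset V, (∀ h ∈ H, (h ∩ T).Nonempty) → t ≤ T.card) :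
    H.card ≤ r ^ t * (n - t).choose (r - t) :=
  stmt_3_general n r t hn H hunif hint htau
end

section
/- Let H be an intersecting r-uniform hypergraph with transversal number τ(H) ≥ t, where r ≥ t. Then there exists a t-uniform hypergraph T on the same vertex set with at most r^t hyperedges such that every hyperedge of H contains some hyperedge of T. -/
/-!
Induction on `t`. Suppose a `k`-uniform family `T` (with `k < τ(H)`) has the property that every
edge of `H` contains a member of `T`. No `s ∈ T` is a transversal, so some edge `e_s` avoids `s`;
replace `s` by the `≤ r` sets `insert v s` with `v ∈ e_s`. An edge `h ⊇ s` meets `e_s` because `H`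
is intersecting, and any common vertex `v` lies outside `s`, so `insert v s` is a `(k+1)`-set
inside `h`.
-/

namespace Finset

variable {V : Type*} [DecidableEq V] {H : Finset (Finset V)} {r t : ℕ}

lemma exists_disjoint_of_card_lt_transversal
    (htau : ∀ T : Finset V, (∀ h ∈ H, (h ∩ T).Nonempty) → t ≤ T.card)
    {s : Finset V} (hs : s.card < t) : ∃ e ∈ H, Disjoint e s := by
  by_contra! hcover
  have := htau s fun h hh => not_disjoint_iff_nonempty_inter.1 (hcover h hh)
  omega

lemma exists_succ_uniform_cover (hunif : ∀ h ∈ H, h.card ≤ r)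
    (hint : ∀ a ∈ H, ∀ b ∈ H, (a ∩ b).Nonempty) {k : ℕ} {T : Finset (Finset V)}
    (hT : ∀ s ∈ T, s.card = k) (hcov : ∀ h ∈ H, ∃ s ∈ T, s ⊆ h)
    (havoid : ∀ s ∈ T, ∃ e ∈ H, Disjoint e s) :
    ∃ T' : Finset (Finset V), T'.card ≤ T.card * r ∧ (∀ s ∈ T', s.card = k + 1) ∧
      ∀ h ∈ H, ∃ s ∈ T', s ⊆ h := by
  choose! e heH hedisj using havoid
  refine ⟨T.biUnion fun s => (e s).image (insert · s), ?_, ?_, ?_⟩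
  · refine card_biUnion_le_card_mul _ _ _ fun s hs => ?_
    exact card_image_le.trans (hunif _ (heH s hs))
  · simp only [mem_biUnion, mem_image]
    rintro _ ⟨s, hs, v, hv, rfl⟩
    rw [card_insert_of_notMem (disjoint_left.1 (hedisj s hs) hv), hT s hs]
  · intro h hh
    obtain ⟨s, hs, hsh⟩ := hcov h hh
    obtain ⟨v, hv⟩ := hint (e s) (heH s hs) h hh
    rw [mem_inter] at hv
    exact ⟨insert v s, mem_biUnion.2 ⟨s, hs, mem_image_of_mem _ hv.1⟩, insert_subset hv.2 hsh⟩

lemma exists_uniform_cover_of_le_transversal (hunif : ∀ h ∈ H, h.card ≤ r)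
    (hint : ∀ a ∈ H, ∀ b ∈ H, (a ∩ b).Nonempty)
    (htau : ∀ T : Finset V, (∀ h ∈ H, (h ∩ T).Nonempty) → t ≤ T.card) :
    ∃ T : Finset (Finset V), T.card ≤ r ^ t ∧ (∀ s ∈ T, s.card = t) ∧
      ∀ h ∈ H, ∃ s ∈ T, s ⊆ h := by
  induction t with
  | zero => exact ⟨{∅}, by simp, by simp, fun h _ => ⟨∅, by simp⟩⟩
  | succ k ih =>
    obtain ⟨T, hTcard, hT, hcov⟩ := ih fun S hS => (htau S hS).trans' k.le_succ
    have havoid : ∀ s ∈ T, ∃ e ∈ H, Disjoint e s := fun s hs =>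
      exists_disjoint_of_card_lt_transversal htau ((hT s hs).trans_lt k.lt_succ_self)
    obtain ⟨T', hT'card, hT', hcov'⟩ := exists_succ_uniform_cover hunif hint hT hcov havoid
    refine ⟨T', ?_, hT', hcov'⟩
    calc T'.card ≤ T.card * r := hT'card
      _ ≤ r ^ k * r := Nat.mul_le_mul_right r hTcard
      _ = r ^ (k + 1) := (pow_succ r k).symm

end Finset

theorem stmt_4_general {V : Type*} [DecidableEq V] (r t : ℕ)
    (H : Finset (Finset V))
    (hunif : ∀ h ∈ H, h.card = r)
    (hint : ∀ a ∈ H, ∀ b ∈ H, (a ∩ b).Nonempty)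
    (htau : ∀ T : Finset V, (∀ h ∈ H, (h ∩ T).Nonempty) → t ≤ T.card) :
    ∃ T : Finset (Finset V), T.card ≤ r ^ t ∧ (∀ s ∈ T, s.card = t) ∧
      ∀ h ∈ H, ∃ s ∈ T, s ⊆ h :=
  Finset.exists_uniform_cover_of_le_transversal (fun h hh => (hunif h hh).le) hint htau

/-- If H is intersecting r-uniform with transversal number at least t (r ≥ t), then
there is a t-uniform hypergraph T with at most r^t hyperedges such that every
hyperedge of H contains a hyperedge of T. -/
theorem stmt_4 {V : Type*} [Fintype V] [DecidableEq V] (r t : ℕ) (hrt : t ≤ r)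
    (H : Finset (Finset V))
    (hunif : ∀ h ∈ H, h.card = r)
    (hint : ∀ a ∈ H, ∀ b ∈ H, (a ∩ b).Nonempty)
    (htau : ∀ T : Finset V, (∀ h ∈ H, (h ∩ T).Nonempty) → t ≤ T.card) :
    ∃ T : Finset (Finset V), T.card ≤ r ^ t ∧ (∀ s ∈ T, s.card = t) ∧
      ∀ h ∈ H, ∃ s ∈ T, s ⊆ h :=
  stmt_4_general r t H hunif hint htau
end

section
/- For integers r ≥ k ≥ 1 and n sufficiently large (e.g., n ≥ 2r), the r-uniform n-vertex k-kernel system has minimum positive co-degree at least k: every (r-1)-set contained in some hyperedge is contained in at least k hyperedges. -/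
/-!
An `(r-1)`-set `S` inside an edge `h` meets `X` in at least `k - 1` points, since `h` has only
one vertex outside `S`. If `S` already meets `X` in `k` points, every vertex outside `S` extends
it to an edge, and there are `n - r + 1 ≥ k` of them. Otherwise `S` meets `X` in exactly `k - 1`
points and each of the `(2k - 1) - (k - 1) = k` vertices of `X \ S` extends it to an edge.
-/

open Finset

section

variable {V : Type*} [DecidableEq V]

def codegree (F : Finset (Finset V)) (S : Finset V) : ℕ := #{E ∈ F | S ⊆ E}

theorem card_le_codegree_of_forall_insert_mem {F : Finset (Finset V)} {S W : Finset V}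
    (hW : ∀ w ∈ W, w ∉ S ∧ insert w S ∈ F) : #W ≤ codegree F S := by
  refine card_le_card_of_injOn (insert · S) (fun w hw ↦ ?_) (fun w hw w' _ heq ↦ ?_)
  · exact mem_filter.2 ⟨(hW w hw).2, subset_insert w S⟩
  · have hw' : w ∈ insert w' S := (show insert w S = insert w' S from heq) ▸ mem_insert_self w S
    exact (mem_insert.1 hw').resolve_right (hW w hw).1

theorem card_inter_le_card_inter_add_one {S h : Finset V} (X : Finset V) (hSh : S ⊆ h)
    (hcard : #h ≤ #S + 1) : #(h ∩ X) ≤ #(S ∩ X) + 1 := by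
  have hsub : (h ∩ X) \ (S ∩ X) ⊆ h \ S := fun x hx ↦ by
    simp only [mem_sdiff, mem_inter] at hx ⊢
    tauto
  have := card_le_card hsub
  rw [card_sdiff_of_subset (inter_subset_inter_right hSh), card_sdiff_of_subset hSh] at this
  omega

variable [Fintype V]

def kernelSystem (X : Finset V) (r k : ℕ) : Finset (Finset V) :=
  {E ∈ univ.powersetCard r | k ≤ #(E ∩ X)}

variable {X S : Finset V} {r k : ℕ}

theorem mem_kernelSystem {E : Finset V} : E ∈ kernelSystem X r k ↔ #E = r ∧ k ≤ #(E ∩ X) := by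
  simp [kernelSystem]

theorem insert_mem_kernelSystem {w : V} (hw : w ∉ S) (hS : #S + 1 = r)
    (hk : k ≤ #(insert w S ∩ X)) : insert w S ∈ kernelSystem X r k :=
  mem_kernelSystem.2 ⟨by rw [card_insert_of_notMem hw, hS], hk⟩

theorem card_compl_le_codegree_kernelSystem (hS : #S + 1 = r) (hSX : k ≤ #(S ∩ X)) :
    #Sᶜ ≤ codegree (kernelSystem X r k) S :=
  card_le_codegree_of_forall_insert_mem fun w hw ↦
    ⟨mem_compl.1 hw, insert_mem_kernelSystem (mem_compl.1 hw) hS <|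
      hSX.trans <| card_le_card <| inter_subset_inter_right <| subset_insert w S⟩

theorem card_sdiff_le_codegree_kernelSystem (hS : #S + 1 = r) (hSX : k ≤ #(S ∩ X) + 1) :
    #(X \ S) ≤ codegree (kernelSystem X r k) S := by
  refine card_le_codegree_of_forall_insert_mem fun w hw ↦ ?_
  obtain ⟨hwX, hwS⟩ := mem_sdiff.1 hw
  refine ⟨hwS, insert_mem_kernelSystem hwS hS ?_⟩
  rwa [insert_inter_of_mem hwX, card_insert_of_notMem fun h ↦ hwS (mem_inter.1 h).1]

theorem le_codegree_kernelSystem (hkr : k ≤ r) (hn : 2 * r ≤ Fintype.card V)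
    (hX : #X = 2 * k - 1) (hS : #S + 1 = r) (hSX : k ≤ #(S ∩ X) + 1) :
    k ≤ codegree (kernelSystem X r k) S := by
  by_cases hk : k ≤ #(S ∩ X)
  · have hcompl := card_compl_le_codegree_kernelSystem hS hk
    rw [card_compl] at hcompl
    omega
  · have hsdiff := card_sdiff_le_codegree_kernelSystem (X := X) hS hSX
    have hsplit := card_sdiff_add_card_inter X S
    rw [inter_comm] at hsplit
    omega

end

theorem stmt_6_general {V : Type*} [Fintype V] [DecidableEq V] (r k n : ℕ)
    (hkr : k ≤ r)
    (hn : Fintype.card V = n) (hn2 : 2 * r ≤ n)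
    (X : Finset V) (hX : X.card = 2 * k - 1) :
    ∀ S : Finset V, S.card = r - 1 →
      (∃ h ∈ (Finset.univ.powersetCard r).filter
          (fun E : Finset V => k ≤ (E ∩ X).card), S ⊆ h) →
      k ≤ (((Finset.univ.powersetCard r).filter
          (fun E : Finset V => k ≤ (E ∩ X).card)).filter fun h => S ⊆ h).card := by
  rintro S hS ⟨h, hh, hSh⟩
  obtain ⟨hcard, hhX⟩ := mem_kernelSystem.1 hh
  have hSX := hhX.trans <| card_inter_le_card_inter_add_one X hSh (by omega)
  by_cases hr : r = 0
  · omega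
  exact le_codegree_kernelSystem hkr (hn ▸ hn2) hX (by omega) hSX

/-- For r ≥ k ≥ 1 and n ≥ 2r, the r-uniform n-vertex k-kernel system has minimum
positive co-degree at least k. -/
theorem stmt_6 {V : Type*} [Fintype V] [DecidableEq V] (r k n : ℕ)
    (hk : 1 ≤ k) (hkr : k ≤ r)
    (hn : Fintype.card V = n) (hn2 : 2 * r ≤ n)
    (X : Finset V) (hX : X.card = 2 * k - 1) :
    ∀ S : Finset V, S.card = r - 1 →
      (∃ h ∈ (Finset.univ.powersetCard r).filter
          (fun E : Finset V => k ≤ (E ∩ X).card), S ⊆ h) →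
      k ≤ (((Finset.univ.powersetCard r).filter
          (fun E : Finset V => k ≤ (E ∩ X).card)).filter fun h => S ⊆ h).card :=
  stmt_6_general r k n hkr hn hn2 X hX
end

section
/- Let H be an intersecting r-uniform hypergraph with minimum positive co-degree at least k, and let X be a minimal transversal of H (no proper subset of X is a transversal). Then |X| ≥ k. -/
/-!
Take `x ∈ X`. By minimality some edge `h` meets `X` only in `x`, so `S = h \ {x}` is an
`(r-1)`-set disjoint from `X`. Every edge through `S` is `S ∪ {y}` for one further vertex `y`,
which must lie in `X` because the edge meets `X`; distinct edges give distinct `y`, so the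
co-degree of `S`, which is at least `k`, is at most `|X|`.
-/

namespace Finset

variable {V : Type*} [DecidableEq V]

lemma exists_inter_eq_singleton_of_minimal_transversal {H : Finset (Finset V)} {X : Finset V}
    (hXmin : ∀ Y : Finset V, Y ⊂ X → ¬ (∀ h ∈ H, (h ∩ Y).Nonempty))
    (hXt : ∀ h ∈ H, (h ∩ X).Nonempty) {x : V} (hx : x ∈ X) :
    ∃ h ∈ H, h ∩ X = {x} := by
  obtain ⟨h, hH, hmiss⟩ : ∃ h ∈ H, ¬ (h ∩ X.erase x).Nonempty := by
    simpa using hXmin (X.erase x) (erase_ssubset hx)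
  refine ⟨h, hH, ?_⟩
  rw [not_nonempty_iff_eq_empty, inter_erase] at hmiss
  obtain ⟨y, hy⟩ := hXt h hH
  have hyx : y = x := by
    by_contra hne
    simpa [hmiss] using mem_erase.2 ⟨hne, hy⟩
  subst hyx
  rw [← insert_erase hy, hmiss, insert_empty]

lemma sdiff_subset_of_card_sdiff_eq_one {g S X : Finset V} (hSX : Disjoint S X)
    (hgX : (g ∩ X).Nonempty) (hgS : (g \ S).card = 1) : g \ S ⊆ X := by
  obtain ⟨a, ha⟩ := card_eq_one.1 hgS
  obtain ⟨y, hy⟩ := hgX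
  have hyS : y ∉ S := fun hyS => disjoint_left.1 hSX hyS (mem_inter.1 hy).2
  have hya : y = a := by
    simpa [ha] using mem_sdiff.2 ⟨(mem_inter.1 hy).1, hyS⟩
  rw [ha, singleton_subset_iff, ← hya]
  exact (mem_inter.1 hy).2

lemma card_filter_subset_le_card_of_disjoint {H : Finset (Finset V)} {S X : Finset V}
    (hSX : Disjoint S X) (hXt : ∀ g ∈ H, (g ∩ X).Nonempty)
    (hone : ∀ g ∈ H, S ⊆ g → (g \ S).card = 1) :
    (H.filter fun g => S ⊆ g).card ≤ X.card := by
  calc (H.filter fun g => S ⊆ g).card ≤ (X.powersetCard 1).card := by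
        refine card_le_card_of_injOn (· \ S) (fun g hg => ?_) (fun g₁ hg₁ g₂ hg₂ heq => ?_)
        · obtain ⟨hgH, hSg⟩ := mem_filter.1 hg
          exact mem_powersetCard.2
            ⟨sdiff_subset_of_card_sdiff_eq_one hSX (hXt g hgH) (hone g hgH hSg),
              hone g hgH hSg⟩
        · rw [← union_sdiff_of_subset (mem_filter.1 hg₁).2,
            ← union_sdiff_of_subset (mem_filter.1 hg₂).2]
          exact congrArg (S ∪ ·) heq
    _ = X.card := by rw [card_powersetCard, Nat.choose_one_right]

end Finset

open Finset in
theorem stmt_9_general {V : Type*} [DecidableEq V] (r k : ℕ)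
    (H : Finset (Finset V)) (hne : H.Nonempty)
    (hunif : ∀ h ∈ H, h.card = r)
    (hcodeg : ∀ S : Finset V, S.card = r - 1 → (∃ h ∈ H, S ⊆ h) →
      k ≤ (H.filter fun h => S ⊆ h).card)
    (X : Finset V)
    (hXt : ∀ h ∈ H, (h ∩ X).Nonempty)
    (hXmin : ∀ Y : Finset V, Y ⊂ X → ¬ (∀ h ∈ H, (h ∩ Y).Nonempty)) :
    k ≤ X.card := by
  obtain ⟨h₀, hh₀⟩ := hne
  obtain ⟨x, hx⟩ := hXt h₀ hh₀
  obtain ⟨h, hH, hhX⟩ :=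
    exists_inter_eq_singleton_of_minimal_transversal hXmin hXt (mem_inter.1 hx).2
  have hxh : x ∈ h := (mem_inter.1 (hhX ▸ mem_singleton_self x)).1
  have hcard : (h.erase x).card = r - 1 := by rw [card_erase_of_mem hxh, hunif h hH]
  have hr : 1 ≤ r := hunif h hH ▸ card_pos.2 ⟨x, hxh⟩
  have hSX : Disjoint (h.erase x) X := by
    rw [disjoint_iff_inter_eq_empty, erase_inter, hhX, erase_singleton]
  refine (hcodeg _ hcard ⟨h, hH, erase_subset x h⟩).trans
    (card_filter_subset_le_card_of_disjoint hSX hXt fun g hg hSg => ?_)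
  rw [card_sdiff_of_subset hSg, hunif g hg, hcard]
  omega

/-- A minimal transversal of a non-empty intersecting r-uniform hypergraph with minimum
positive co-degree at least k has size at least k. -/
theorem stmt_9 {V : Type*} [Fintype V] [DecidableEq V] (r k : ℕ)
    (H : Finset (Finset V)) (hne : H.Nonempty)
    (hunif : ∀ h ∈ H, h.card = r)
    (hint : ∀ a ∈ H, ∀ b ∈ H, (a ∩ b).Nonempty)
    (hcodeg : ∀ S : Finset V, S.card = r - 1 → (∃ h ∈ H, S ⊆ h) →
      k ≤ (H.filter fun h => S ⊆ h).card)
    (X : Finset V)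
    (hXt : ∀ h ∈ H, (h ∩ X).Nonempty)
    (hXmin : ∀ Y : Finset V, Y ⊂ X → ¬ (∀ h ∈ H, (h ∩ Y).Nonempty)) :
    k ≤ X.card :=
  stmt_9_general r k H hne hunif hcodeg X hXt hXmin
end

section
/- Let H be an intersecting r-uniform hypergraph with minimum positive co-degree at least k, let X be a minimum transversal of H with |X| = k, and for x ∈ X let H_x = {h \ {x} : h ∈ E(H), h ∩ X = {x}}. Then for any x, y ∈ X the hypergraphs H_x and H_y are equal, and H_x is an intersecting (r-1)-uniform hypergraph. -/
/-!
Fix `x ∈ X` and an edge `h` with `h ∩ X = {x}`, and put `A = h \ {x}`, a set of size `r - 1` disjoint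
from `X`. Every edge through `A` meets `X` outside `A`, so by uniformity it is `A ∪ {z}` for some
`z ∈ X`; there are at most `|X| = k` such sets, and the co-degree of `A` is at least `k`, so all of
them are edges. Hence `A ∈ H_y` for every `y ∈ X`. For `A, B ∈ H_x` and `y ≠ x` in `X`, the edges
`A ∪ {x}` and `B ∪ {y}` meet, necessarily outside `X`, i.e. in `A ∩ B`.
-/

namespace Hypergraph

variable {V : Type*} [DecidableEq V]

/-- The link `H_x = {h \ {x} : h ∈ H, h ∩ X = {x}}`. -/
def link (H : Finset (Finset V)) (X : Finset V) (x : V) : Finset (Finset V) :=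
  (H.filter fun h => h ∩ X = {x}).image fun h => h.erase x

variable {H : Finset (Finset V)} {X : Finset V} {x : V}

theorem mem_link_iff (hx : x ∈ X) {A : Finset V} :
    A ∈ link H X x ↔ Disjoint A X ∧ insert x A ∈ H := by
  constructor
  · rintro hA
    obtain ⟨h, hh, rfl⟩ := Finset.mem_image.mp hA
    obtain ⟨hH, hhX⟩ := Finset.mem_filter.mp hh
    have hxh : x ∈ h := (Finset.mem_inter.mp (hhX ▸ Finset.mem_singleton_self x)).1
    refine ⟨?_, by rwa [Finset.insert_erase hxh]⟩
    rw [Finset.disjoint_iff_inter_eq_empty, Finset.erase_inter, hhX, Finset.erase_singleton]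
  · rintro ⟨hAX, hH⟩
    have hxA : x ∉ A := Finset.disjoint_right.mp hAX hx
    refine Finset.mem_image.mpr ⟨insert x A, Finset.mem_filter.mpr ⟨hH, ?_⟩,
      Finset.erase_insert hxA⟩
    rw [Finset.insert_inter_of_mem hx, Finset.disjoint_iff_inter_eq_empty.mp hAX]
    rfl

theorem card_of_mem_link {r : ℕ} (hunif : ∀ h ∈ H, h.card = r) (hx : x ∈ X) {A : Finset V}
    (hA : A ∈ link H X x) : A.card = r - 1 := by
  obtain ⟨hAX, hH⟩ := (mem_link_iff hx).mp hA
  have := hunif _ hH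
  rw [Finset.card_insert_of_notMem (Finset.disjoint_right.mp hAX hx)] at this
  omega

theorem insert_mem_of_le_codegree {r : ℕ} (hunif : ∀ h ∈ H, h.card = r)
    (hXt : ∀ h ∈ H, (h ∩ X).Nonempty) {A : Finset V} (hAX : Disjoint A X)
    (hAcard : A.card = r - 1) (hr : 1 ≤ r)
    (hcodeg : X.card ≤ (H.filter fun h => A ⊆ h).card) {y : V} (hy : y ∈ X) :
    insert y A ∈ H := by
  have hedges : H.filter (fun h => A ⊆ h) ⊆ X.image (insert · A) := by
    intro h hh
    obtain ⟨hH, hAh⟩ := Finset.mem_filter.mp hh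
    obtain ⟨z, hz⟩ := hXt h hH
    obtain ⟨hzh, hzX⟩ := Finset.mem_inter.mp hz
    have hzA : z ∉ A := Finset.disjoint_right.mp hAX hzX
    have hcard : h.card ≤ (insert z A).card := by
      rw [Finset.card_insert_of_notMem hzA, hAcard, hunif h hH]
      omega
    exact Finset.mem_image.mpr
      ⟨z, hzX, Finset.eq_of_subset_of_card_le (Finset.insert_subset hzh hAh) hcard⟩
  have hall : H.filter (fun h => A ⊆ h) = X.image (insert · A) :=
    Finset.eq_of_subset_of_card_le hedges (Finset.card_image_le.trans hcodeg)
  have hyA : insert y A ∈ H.filter (fun h => A ⊆ h) := hall ▸ Finset.mem_image_of_mem _ hy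
  exact (Finset.mem_filter.mp hyA).1

theorem link_subset_link {r : ℕ} (hunif : ∀ h ∈ H, h.card = r)
    (hcodeg : ∀ S : Finset V, S.card = r - 1 → (∃ h ∈ H, S ⊆ h) →
      X.card ≤ (H.filter fun h => S ⊆ h).card)
    (hXt : ∀ h ∈ H, (h ∩ X).Nonempty) (hx : x ∈ X) {y : V} (hy : y ∈ X) :
    link H X x ⊆ link H X y := by
  intro A hA
  obtain ⟨hAX, hH⟩ := (mem_link_iff hx).mp hA
  have hAcard := card_of_mem_link hunif hx hA
  have hr : 1 ≤ r := hunif _ hH ▸ Finset.card_pos.mpr ⟨x, Finset.mem_insert_self x A⟩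
  exact (mem_link_iff hy).mpr ⟨hAX, insert_mem_of_le_codegree hunif hXt hAX hAcard hr
    (hcodeg A hAcard ⟨_, hH, Finset.subset_insert x A⟩) hy⟩

theorem link_intersecting (hint : ∀ a ∈ H, ∀ b ∈ H, (a ∩ b).Nonempty) (hx : x ∈ X) {y : V}
    (hy : y ∈ X) (hxy : x ≠ y) {A B : Finset V} (hA : A ∈ link H X x) (hB : B ∈ link H X y) :
    (A ∩ B).Nonempty := by
  obtain ⟨hAX, hAH⟩ := (mem_link_iff hx).mp hA
  obtain ⟨hBX, hBH⟩ := (mem_link_iff hy).mp hB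
  obtain ⟨c, hc⟩ := hint _ hAH _ hBH
  obtain ⟨hcA, hcB⟩ := Finset.mem_inter.mp hc
  by_cases hcX : c ∈ X
  · rcases Finset.mem_insert.mp hcA with rfl | hcA'
    · rcases Finset.mem_insert.mp hcB with rfl | hcB'
      · exact absurd rfl hxy
      · exact absurd hcX (Finset.disjoint_left.mp hBX hcB')
    · exact absurd hcX (Finset.disjoint_left.mp hAX hcA')
  · have hcx : c ≠ x := fun h => hcX (h ▸ hx)
    have hcy : c ≠ y := fun h => hcX (h ▸ hy)
    exact ⟨c, Finset.mem_inter.mpr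
      ⟨Finset.mem_of_mem_insert_of_ne hcA hcx, Finset.mem_of_mem_insert_of_ne hcB hcy⟩⟩

end Hypergraph

open Hypergraph in
theorem stmt_14_general {V : Type*} [DecidableEq V] (r k : ℕ) (hk : 2 ≤ k)
    (H : Finset (Finset V))
    (hunif : ∀ h ∈ H, h.card = r)
    (hint : ∀ a ∈ H, ∀ b ∈ H, (a ∩ b).Nonempty)
    (hcodeg : ∀ S : Finset V, S.card = r - 1 → (∃ h ∈ H, S ⊆ h) →
      k ≤ (H.filter fun h => S ⊆ h).card)
    (X : Finset V) (hXk : X.card = k)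
    (hXt : ∀ h ∈ H, (h ∩ X).Nonempty) :
    (∀ x ∈ X, ∀ y ∈ X,
      ((H.filter fun h => h ∩ X = {x}).image fun h => h.erase x) =
      ((H.filter fun h => h ∩ X = {y}).image fun h => h.erase y)) ∧
    (∀ x ∈ X,
      (∀ A ∈ (H.filter fun h => h ∩ X = {x}).image fun h => h.erase x, A.card = r - 1) ∧
      (∀ A ∈ (H.filter fun h => h ∩ X = {x}).image fun h => h.erase x,
       ∀ B ∈ (H.filter fun h => h ∩ X = {x}).image fun h => h.erase x,
        (A ∩ B).Nonempty)) := by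
  subst hXk
  have hsub : ∀ x ∈ X, ∀ y ∈ X, link H X x ⊆ link H X y :=
    fun x hx y hy => link_subset_link hunif hcodeg hXt hx hy
  refine ⟨fun x hx y hy => (hsub x hx y hy).antisymm (hsub y hy x hx),
    fun x hx => ⟨fun A hA => card_of_mem_link hunif hx hA, fun A hA B hB => ?_⟩⟩
  obtain ⟨y, hy, hyx⟩ := Finset.exists_mem_ne (by omega : 1 < X.card) x
  exact link_intersecting hint hx hy hyx.symm hA (hsub x hx y hy hB)

/-- If X is a minimum transversal of size k of an intersecting r-uniform hypergraph H
with minimum positive co-degree at least k (k ≥ 2), then the hypergraphs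
H_x = {h \ {x} : h ∈ H, h ∩ X = {x}} coincide for all x ∈ X, and each is an
intersecting (r-1)-uniform hypergraph. -/
theorem stmt_14 {V : Type*} [Fintype V] [DecidableEq V] (r k : ℕ) (hk : 2 ≤ k)
    (H : Finset (Finset V))
    (hunif : ∀ h ∈ H, h.card = r)
    (hint : ∀ a ∈ H, ∀ b ∈ H, (a ∩ b).Nonempty)
    (hcodeg : ∀ S : Finset V, S.card = r - 1 → (∃ h ∈ H, S ⊆ h) →
      k ≤ (H.filter fun h => S ⊆ h).card)
    (X : Finset V) (hXk : X.card = k)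
    (hXt : ∀ h ∈ H, (h ∩ X).Nonempty)
    (hXmin : ∀ T : Finset V, (∀ h ∈ H, (h ∩ T).Nonempty) → X.card ≤ T.card) :
    (∀ x ∈ X, ∀ y ∈ X,
      ((H.filter fun h => h ∩ X = {x}).image fun h => h.erase x) =
      ((H.filter fun h => h ∩ X = {y}).image fun h => h.erase y)) ∧
    (∀ x ∈ X,
      (∀ A ∈ (H.filter fun h => h ∩ X = {x}).image fun h => h.erase x, A.card = r - 1) ∧
      (∀ A ∈ (H.filter fun h => h ∩ X = {x}).image fun h => h.erase x,
       ∀ B ∈ (H.filter fun h => h ∩ X = {x}).image fun h => h.erase x,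
        (A ∩ B).Nonempty)) :=
  stmt_14_general r k hk H hunif hint hcodeg X hXk hXt
end

section
/- Fix integers r ≥ 3, k ≥ 1, p ≥ 1, and let f(r,p) denote the minimum integer such that every r-uniform hypergraph with f(r,p) hyperedges contains a sunflower with p petals. For n sufficiently large, every r-uniform n-vertex hypergraph G with at least 2·r^{r-k}·f(r, p·r^{r-k})·C(n-k-1, r-k-1) hyperedges contains a sunflower with p petals whose core has size at most k. -/
/-- A family of r-subsets of ℕ contains a sunflower with q petals. -/
def HasSunflower (F : Finset (Finset ℕ)) (q : ℕ) : Prop :=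
  ∃ S ⊆ F, S.card = q ∧ ∃ Y : Finset ℕ, ∀ a ∈ S, ∀ b ∈ S, a ≠ b → a ∩ b = Y

/-!
Greedily pick edges of `G`, discarding after each pick `h` every edge meeting `h` in more than `k`
vertices. Each `(k+1)`-subset of `h` lies in at most `C(n-k-1, r-k-1)` edges, so a pick discards
at most `C(r,k+1)·C(n-k-1, r-k-1) + 1 ≤ 2·r^(r-k)·C(n-k-1, r-k-1)` edges and the picked family `H`
has at least `f(r, p·r^(r-k))` edges, any two of which share at most `k` vertices. A sunflower in
`H` with `p·r^(r-k) ≥ p` petals then has a core of size at most `k`, being the intersection of two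
of its edges.
-/

open Finset

section Greedy

variable {α : Type*} [DecidableEq α]

theorem exists_pairwise_not_rel_card_le_mul (R : α → α → Prop) [DecidableRel R]
    (hR : ∀ ⦃a b⦄, R a b → R b a) (d : ℕ) (A : Finset α)
    (hdeg : ∀ a ∈ A, #{b ∈ A | R a b} ≤ d) :
    ∃ H ⊆ A, (H : Set α).Pairwise (fun a b => ¬ R a b) ∧ #A ≤ #H * (d + 1) := by
  induction A using Finset.strongInduction with
  | H A ih =>
  rcases A.eq_empty_or_nonempty with rfl | ⟨a, ha⟩
  · exact ⟨∅, empty_subset _, by simp, by simp⟩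
  set N := insert a {b ∈ A | R a b}
  have hNA : N ⊆ A := insert_subset ha (filter_subset _ _)
  obtain ⟨H, hHA, hH, hcard⟩ := ih (A \ N) (sdiff_ssubset hNA ⟨a, mem_insert_self _ _⟩)
    (fun b hb => (card_le_card (filter_subset_filter _ sdiff_subset)).trans
      (hdeg b (mem_sdiff.1 hb).1))
  have haH : a ∉ H := fun h => (mem_sdiff.1 (hHA h)).2 (mem_insert_self _ _)
  have hfar : ∀ b ∈ H, ¬ R a b := fun b hb hab =>
    (mem_sdiff.1 (hHA hb)).2 (mem_insert_of_mem (mem_filter.2 ⟨(mem_sdiff.1 (hHA hb)).1, hab⟩))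
  refine ⟨insert a H, insert_subset ha (hHA.trans sdiff_subset), ?_, ?_⟩
  · rw [coe_insert]
    exact hH.insert fun b hb _ => ⟨hfar b hb, fun hba => hfar b hb (hR hba)⟩
  · have hN : #N ≤ d + 1 := (card_insert_le _ _).trans (Nat.add_le_add_right (hdeg a ha) 1)
    calc #A = #(A \ N) + #N := (card_sdiff_add_card_eq_card hNA).symm
      _ ≤ #H * (d + 1) + (d + 1) := Nat.add_le_add hcard hN
      _ = #(insert a H) * (d + 1) := by rw [card_insert_of_notMem haH]; ring

end Greedy

section Counting

variable {α : Type*} [Fintype α] [DecidableEq α]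

theorem card_filter_subset_le_choose (T : Finset α) (r : ℕ) (A : Finset (Finset α))
    (hA : ∀ e ∈ A, #e = r) :
    #{e ∈ A | T ⊆ e} ≤ (Fintype.card α - #T).choose (r - #T) := by
  have hmaps : ∀ e ∈ {e ∈ A | T ⊆ e}, e \ T ∈ powersetCard (r - #T) (univ \ T) := by
    intro e he
    obtain ⟨heA, hTe⟩ := mem_filter.1 he
    rw [mem_powersetCard, card_sdiff_of_subset hTe, hA e heA]
    exact ⟨sdiff_subset_sdiff (subset_univ _) le_rfl, rfl⟩
  have hinj : Set.InjOn (· \ T) ({e ∈ A | T ⊆ e} : Finset _) := by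
    intro a ha b hb hab
    rw [← sdiff_union_of_subset (mem_filter.1 ha).2,
      ← sdiff_union_of_subset (mem_filter.1 hb).2]
    exact congrArg (· ∪ T) hab
  simpa [card_sdiff_of_subset (subset_univ T)] using card_le_card_of_injOn _ hmaps hinj

theorem card_filter_lt_card_inter_le (h : Finset α) (k r : ℕ) (hh : #h = r)
    (A : Finset (Finset α)) (hA : ∀ e ∈ A, #e = r) :
    #{e ∈ A | k < #(h ∩ e)} ≤
      r.choose (k + 1) * (Fintype.card α - (k + 1)).choose (r - (k + 1)) := by
  have hcover : {e ∈ A | k < #(h ∩ e)} ⊆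
      (powersetCard (k + 1) h).biUnion fun T => {e ∈ A | T ⊆ e} := by
    intro e he
    obtain ⟨heA, hlt⟩ := mem_filter.1 he
    obtain ⟨T, hT, hTcard⟩ := exists_subset_card_eq hlt
    exact mem_biUnion.2 ⟨T, mem_powersetCard.2 ⟨hT.trans inter_subset_left, hTcard⟩,
      mem_filter.2 ⟨heA, hT.trans inter_subset_right⟩⟩
  calc #{e ∈ A | k < #(h ∩ e)}
      ≤ ∑ T ∈ powersetCard (k + 1) h, #{e ∈ A | T ⊆ e} :=
        (card_le_card hcover).trans card_biUnion_le
    _ ≤ ∑ _T ∈ powersetCard (k + 1) h, (Fintype.card α - (k + 1)).choose (r - (k + 1)) :=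
        sum_le_sum fun T hT => (mem_powersetCard.1 hT).2 ▸ card_filter_subset_le_choose T r A hA
    _ = r.choose (k + 1) * (Fintype.card α - (k + 1)).choose (r - (k + 1)) := by
        rw [sum_const, card_powersetCard, hh, smul_eq_mul]

end Counting

theorem choose_succ_le_pow_sub (r k : ℕ) : r.choose (k + 1) ≤ r ^ (r - k) := by
  rcases lt_or_ge r (k + 1) with hrk | hkr
  · simp [Nat.choose_eq_zero_of_lt hrk]
  calc r.choose (k + 1) = r.choose (r - (k + 1)) := (Nat.choose_symm hkr).symm
    _ ≤ r ^ (r - (k + 1)) := Nat.choose_le_pow _ _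
    _ ≤ r ^ (r - k) := Nat.pow_le_pow_right (by omega) (by omega)

theorem one_le_pow_sub_self (r k : ℕ) : 1 ≤ r ^ (r - k) := by
  rcases Nat.eq_zero_or_pos r with rfl | hr
  · simp
  · exact Nat.one_le_pow _ _ hr

theorem HasSunflower.of_map {α : Type*} [DecidableEq α] (ι : α ↪ ℕ) {H : Finset (Finset α)}
    {q : ℕ} (h : HasSunflower (H.map (mapEmbedding ι).toEmbedding) q) :
    ∃ S ⊆ H, #S = q ∧ ∃ Y : Finset α, ∀ a ∈ S, ∀ b ∈ S, a ≠ b → a ∩ b = Y := by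
  obtain ⟨_, hmap, hS, Y, hY⟩ := h
  obtain ⟨S, hSH, rfl⟩ := subset_map_iff.1 hmap
  refine ⟨S, hSH, by simpa using hS, Y.preimage ι ι.injective.injOn, fun a ha b hb hab => ?_⟩
  have := hY _ (mem_map_of_mem _ ha) _ (mem_map_of_mem _ hb) (by simpa using hab)
  simp only [RelEmbedding.coe_toEmbedding, mapEmbedding_apply, ← map_inter] at this
  rw [← this, preimage_map]

theorem exists_core_card_le {α : Type*} [DecidableEq α] {S : Finset (Finset α)} {Y : Finset α}
    {k : ℕ} (hY : ∀ a ∈ S, ∀ b ∈ S, a ≠ b → a ∩ b = Y)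
    (hk : ∀ a ∈ S, ∀ b ∈ S, a ≠ b → #(a ∩ b) ≤ k) :
    ∃ Y' : Finset α, #Y' ≤ k ∧ ∀ a ∈ S, ∀ b ∈ S, a ≠ b → a ∩ b = Y' := by
  rcases le_or_gt #S 1 with hS | hS
  · exact ⟨∅, by simp, fun a ha b hb hab => absurd (card_le_one.1 hS a ha b hb) hab⟩
  · obtain ⟨a, ha, b, hb, hab⟩ := one_lt_card.1 hS
    exact ⟨Y, hY a ha b hb hab ▸ hk a ha b hb hab, hY⟩

theorem stmt_18_general (r k p : ℕ)
    (f : ℕ → ℕ → ℕ)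
    (hf1 : ∀ q : ℕ, ∀ F : Finset (Finset ℕ), (∀ h ∈ F, h.card = r) →
      f r q ≤ F.card → HasSunflower F q) :
    ∃ n₀ : ℕ, ∀ n, n₀ ≤ n → ∀ G : Finset (Finset (Fin n)),
      (∀ h ∈ G, h.card = r) →
      2 * r ^ (r - k) * f r (p * r ^ (r - k)) * (n - (k + 1)).choose (r - (k + 1)) ≤ G.card →
      ∃ S ⊆ G, S.card = p ∧ ∃ Y : Finset (Fin n), Y.card ≤ k ∧
        ∀ a ∈ S, ∀ b ∈ S, a ≠ b → a ∩ b = Y := by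
  refine ⟨r, fun n hn G hG hGcard => ?_⟩
  set C := (n - (k + 1)).choose (r - (k + 1))
  set q := p * r ^ (r - k)
  obtain ⟨H, hHG, hH, hGH⟩ := exists_pairwise_not_rel_card_le_mul (fun h e => k < #(h ∩ e))
    (fun a b hab => by rwa [inter_comm] at hab) (r.choose (k + 1) * C) G
    (fun h hh => by simpa using card_filter_lt_card_inter_le h k r (hG h hh) G hG)
  have hfH : f r q ≤ #H := by
    have hC : 1 ≤ C := Nat.choose_pos (by omega)
    have hdeg : r.choose (k + 1) * C + 1 ≤ 2 * r ^ (r - k) * C := by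
      nlinarith [choose_succ_le_pow_sub r k, one_le_pow_sub_self r k]
    refine Nat.le_of_mul_le_mul_right ?_ (Nat.succ_pos (r.choose (k + 1) * C))
    calc f r q * (r.choose (k + 1) * C + 1) ≤ f r q * (2 * r ^ (r - k) * C) :=
          Nat.mul_le_mul_left _ hdeg
      _ = 2 * r ^ (r - k) * f r q * C := by ring
      _ ≤ #G := hGcard
      _ ≤ #H * (r.choose (k + 1) * C + 1) := hGH
  obtain ⟨S, hSH, hS, Y, hY⟩ := HasSunflower.of_map Fin.valEmbedding <|
    hf1 q _ (by simpa using fun h hh => hG h (hHG hh)) (by simpa using hfH)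
  obtain ⟨T, hTS, hT⟩ := exists_subset_card_eq (hS ▸ Nat.le_mul_of_pos_right p
    (one_le_pow_sub_self r k) : p ≤ #S)
  obtain ⟨Y', hY', hTY'⟩ := exists_core_card_le (fun a ha b hb => hY a (hTS ha) b (hTS hb))
    (fun a ha b hb hab => not_lt.1 (hH (hSH (hTS ha)) (hSH (hTS hb)) hab))
  exact ⟨T, hTS.trans (hSH.trans hHG), hT, Y', hY', hTY'⟩

/-- With f(r,·) the sunflower function, for n large every r-uniform n-vertex hypergraph
with at least 2·r^{r-k}·f(r, p·r^{r-k})·C(n-k-1, r-k-1) hyperedges contains a sunflower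
with p petals and core of size at most k. -/
theorem stmt_18 (r k p : ℕ) (hr : 3 ≤ r) (hk : 1 ≤ k) (hp : 1 ≤ p)
    (f : ℕ → ℕ → ℕ)
    (hf1 : ∀ q : ℕ, ∀ F : Finset (Finset ℕ), (∀ h ∈ F, h.card = r) →
      f r q ≤ F.card → HasSunflower F q)
    (hf2 : ∀ q m : ℕ,
      (∀ F : Finset (Finset ℕ), (∀ h ∈ F, h.card = r) → m ≤ F.card → HasSunflower F q) →
      f r q ≤ m) :
    ∃ n₀ : ℕ, ∀ n, n₀ ≤ n → ∀ G : Finset (Finset (Fin n)),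
      (∀ h ∈ G, h.card = r) →
      2 * r ^ (r - k) * f r (p * r ^ (r - k)) * (n - (k + 1)).choose (r - (k + 1)) ≤ G.card →
      ∃ S ⊆ G, S.card = p ∧ ∃ Y : Finset (Fin n), Y.card ≤ k ∧
        ∀ a ∈ S, ∀ b ∈ S, a ≠ b → a ∩ b = Y :=
  stmt_18_general r k p f hf1
end
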